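/- Let F : ℝ → ℝ be a lift of an orientation-preserving circle homeomorphism whose induced circle homeomorphism f is minimal, and let (G_t)_{t∈[0,1]} be a continuous family of lifts of orientation-preserving circle homeomorphisms with G₀ = id_ℝ and such that for every x ∈ ℝ the map t ↦ G_t(x) is nondecreasing. Let ε ∈ (0,1] be such that τ(G_ε ∘ F) − τ(F) < 1 (so that the rotation numbers of the induced circle homeomorphisms of the G_t ∘ F, t ∈ [0,ε], do not attain every value of ℝ/ℤ) and such that G_ε(F(x₀)) ≠ F(x₀) for some x₀ ∈ ℝ. Then τ(G_ε ∘ F) ≠ τ(F). -/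

import Mathlib

open Set Filter

/-- A lift of an orientation-preserving circle homeomorphism: a continuous strictly increasing
surjection `F : ℝ → ℝ` with `F(x+1) = F(x)+1` for all `x`. -/
def IsCircleLift (F : ℝ → ℝ) : Prop :=
  Continuous F ∧ StrictMono F ∧ Function.Surjective F ∧ ∀ x : ℝ, F (x + 1) = F x + 1

/-- `τ` is the translation number of the lift `F`: `(Fⁿ(x) − x)/n → τ` for every `x`.
The rotation number of the induced circle homeomorphism is `τ` mod 1. -/
def HasTransNum (F : ℝ → ℝ) (τ : ℝ) : Prop :=
  ∀ x : ℝ, Tendsto (fun n : ℕ => (F^[n] x - x) / (n : ℝ)) atTop (nhds τ)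

/-- The circle homeomorphism induced by the lift `F` is minimal: for every `x ∈ ℝ` the full
orbit `{Fⁿ(x) + m : n, m ∈ ℤ}` is dense in `ℝ` (`y` belongs to this set iff `Fⁿ(x) + m = y`
for some `n ∈ ℕ, m ∈ ℤ`, or `Fⁿ(y) + m = x` for some `n ∈ ℕ, m ∈ ℤ`). -/
def IsMinimalLift (F : ℝ → ℝ) : Prop :=
  ∀ x : ℝ, Dense {y : ℝ | ∃ n : ℕ, ∃ m : ℤ, F^[n] x + (m : ℝ) = y ∨ F^[n] y + (m : ℝ) = x}

/-!
A minimal lift `F` has irrational translation number `θ`: a rational one would give a periodic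
orbit, whose full orbit lies in a closed countable set. Hence the Poincaré semiconjugacy `φ` from
`F` to `x ↦ x + θ` is injective with dense range, so it is a conjugacy. Conjugating `G_ε ∘ F ≥ F`
by `φ` gives a continuous lift `k ≥ id + θ`, with strict inequality near some point `y₀`. Since
`ℕθ + ℤ` is dense, every `y + nθ` enters that neighbourhood of `y₀ + ℤ` after a bounded number
`n ≤ N` of steps, so `k^(N+1) ≥ id + (N+1)θ + δ` and `τ(k) ≥ θ + δ/(N+1) > θ`.
-/

open Function

theorem Irrational.natCast_mul_add_intCast_eq_zero {θ : ℝ} (hθ : Irrational θ) {k : ℕ} {m : ℤ}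
    (h : k * θ + m = 0) : k = 0 ∧ m = 0 := by
  obtain rfl | hk := eq_or_ne k 0
  · exact ⟨rfl, by simpa using h⟩
  · exact absurd h ((hθ.natCast_mul hk).add_intCast m).ne_zero

theorem Irrational.dense_natCast_mul_add_intCast {θ : ℝ} (hθ : Irrational θ) :
    Dense {x : ℝ | ∃ (n : ℕ) (m : ℤ), n * θ + m = x} := by
  have hcircle : DenseRange (fun n : ℕ => n • (θ : AddCircle (1 : ℝ))) :=
    denseRange_zsmul_iff_nsmul.1 (AddCircle.denseRange_zsmul_coe_iff.2 (by simpa using hθ))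
  refine (QuotientAddGroup.dense_preimage_mk.2 hcircle).mono ?_
  rintro x ⟨n, hn⟩
  obtain ⟨m, hm⟩ := AddSubgroup.mem_zmultiples_iff.1 (QuotientAddGroup.eq.1 hn)
  simp only [zsmul_one, nsmul_eq_mul] at hm
  exact ⟨n, m, by linarith⟩

theorem Irrational.exists_forall_exists_natCast_mul_add_intCast_mem {θ : ℝ} (hθ : Irrational θ)
    {U : Set ℝ} (hU : IsOpen U) (hne : U.Nonempty) :
    ∃ N : ℕ, ∀ y, ∃ n ≤ N, ∃ m : ℤ, y + n * θ + m ∈ U := by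
  set V : ℕ → Set ℝ := fun N => ⋃ n ≤ N, ⋃ m : ℤ, (fun y => y + n * θ + m) ⁻¹' U
  have hV {N : ℕ} {y : ℝ} : y ∈ V N ↔ ∃ n ≤ N, ∃ m : ℤ, y + n * θ + m ∈ U := by
    simp only [V, mem_iUnion, mem_preimage, exists_prop]
  have hVopen (N : ℕ) : IsOpen (V N) :=
    isOpen_biUnion fun n _ => isOpen_iUnion fun m => hU.preimage (by fun_prop)
  have hVmono : Monotone V := fun N N' hNN' y hy => by
    obtain ⟨n, hn, m, hm⟩ := hV.1 hy
    exact hV.2 ⟨n, hn.trans hNN', m, hm⟩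
  have hVcover : Icc (0 : ℝ) 1 ⊆ ⋃ N, V N := by
    intro y _
    obtain ⟨u, hu⟩ := hne
    obtain ⟨_, ⟨n, m, rfl⟩, hnm⟩ := hθ.dense_natCast_mul_add_intCast.exists_mem_open
      (hU.preimage (continuous_const_add y)) ⟨u - y, by simpa using hu⟩
    exact mem_iUnion.2 ⟨n, hV.2 ⟨n, le_rfl, m, by simpa [add_assoc] using hnm⟩⟩
  obtain ⟨N, hN⟩ := isCompact_Icc.elim_directed_cover V hVopen hVcover hVmono.directed_le
  refine ⟨N, fun y => ?_⟩
  obtain ⟨n, hn, m, hm⟩ := hV.1 (hN ⟨Int.fract_nonneg y, (Int.fract_lt_one y).le⟩)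
  refine ⟨n, hn, m - ⌊y⌋, ?_⟩
  convert hm using 1
  rw [Int.fract]
  push_cast
  ring

def IsCircleLift.toCircleDeg1Lift {F : ℝ → ℝ} (hF : IsCircleLift F) : CircleDeg1Lift :=
  ⟨⟨F, hF.2.1.monotone⟩, hF.2.2.2⟩

namespace CircleDeg1Lift

theorem translationNumber_eq_of_hasTransNum (f : CircleDeg1Lift) {θ : ℝ} (h : HasTransNum f θ) :
    f.translationNumber = θ :=
  translationNumber_eq_of_tendsto₀ f (by simpa using h 0)

theorem add_natCast_mul_le_pow_apply (f : CircleDeg1Lift) {t : ℝ} (h : ∀ x, x + t ≤ f x)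
    (n : ℕ) (x : ℝ) : x + n * t ≤ (f ^ n) x := by
  simpa [coe_pow, add_right_iterate, nsmul_eq_mul] using
    Monotone.iterate_le_of_le (monotone_id.add_const t) (fun x => h x) n x

theorem lt_translationNumber_of_add_le_of_add_lt (f : CircleDeg1Lift) (hf : Continuous f) {t : ℝ}
    (ht : Irrational t) (hle : ∀ x, x + t ≤ f x) {x₀ : ℝ} (hlt : x₀ + t < f x₀) :
    t < f.translationNumber := by
  set ψ : ℝ → ℝ := fun x => f x - x - t
  have hψ (x : ℝ) (m : ℤ) : ψ (x + m) = ψ x := by simp only [ψ, map_add_int]; ring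
  set δ := ψ x₀ / 2
  have hδ : 0 < δ := by simp only [δ, ψ]; linarith
  obtain ⟨N, hN⟩ := ht.exists_forall_exists_natCast_mul_add_intCast_mem
    (isOpen_lt continuous_const (by fun_prop) : IsOpen {x | δ < ψ x})
    ⟨x₀, by simp only [mem_ofPred_eq, δ]; linarith⟩
  have hpow (x : ℝ) : x + ((N + 1 : ℕ) * t + δ) ≤ (f ^ (N + 1)) x := by
    obtain ⟨n, hnN, m, hm⟩ := hN x
    have hbump : x + (n + 1) * t + δ ≤ (f ^ (n + 1)) x := calc
      x + (n + 1) * t + δ ≤ f (x + n * t) := by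
        have := hψ (x + n * t) m
        simp only [mem_ofPred_eq, this, ψ] at hm
        linarith
      _ ≤ f ((f ^ n) x) := f.monotone (f.add_natCast_mul_le_pow_apply hle n x)
      _ = (f ^ (n + 1)) x := by rw [pow_succ', mul_apply]
    calc x + ((N + 1 : ℕ) * t + δ) = x + (n + 1) * t + δ + (N - n : ℕ) * t := by
          push_cast [Nat.cast_sub hnN]; ring
      _ ≤ (f ^ (n + 1)) x + (N - n : ℕ) * t := by gcongr
      _ ≤ (f ^ (N - n)) ((f ^ (n + 1)) x) := f.add_natCast_mul_le_pow_apply hle _ _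
      _ = (f ^ (N + 1)) x := by rw [← mul_apply, ← pow_add]; congr 2; omega
  have hτ := (f ^ (N + 1)).le_translationNumber_of_add_le hpow
  rw [translationNumber_pow] at hτ
  exact lt_of_mul_lt_mul_left (by linarith) (Nat.cast_nonneg (N + 1))

theorem irrational_translationNumber_of_isMinimalLift (f : CircleDeg1Lift) (hf : Continuous f)
    (hfi : Injective f) (hmin : IsMinimalLift f) : Irrational f.translationNumber := by
  rintro ⟨q, hq⟩
  set n := q.den
  set p := q.num
  obtain ⟨x₁, hx₁⟩ := (f.translationNumber_eq_rat_iff hf q.pos).1 (by rw [← hq, Rat.cast_def])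
  have hperiodic (a : ℕ) (c : ℤ) : (f ^ (n * a)) (x₁ + c) = x₁ + (c + a * p : ℤ) := by
    induction a with
    | zero => simp
    | succ a ih =>
      rw [Nat.mul_succ, add_comm, pow_add, mul_apply, ih, map_add_int, hx₁]
      push_cast; ring
  have hreduce (j : ℕ) (y : ℝ) (c : ℤ) (hc : (f ^ j) y = x₁ + c) :
      ∃ c' : ℤ, (f ^ (j % n)) y = x₁ + c' := by
    refine ⟨c - (j / n : ℕ) * p, (coe_pow f (n * (j / n)) ▸ hfi.iterate _) ?_⟩
    rw [← mul_apply, ← pow_add, Nat.div_add_mod, hc, hperiodic]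
    push_cast; ring
  set A : Set ℝ := ⋃ j ∈ Iio n, (fun y => (f ^ j) y - x₁) ⁻¹' range ((↑) : ℤ → ℝ)
  have hmemA (j : ℕ) (y : ℝ) (c : ℤ) (hc : (f ^ j) y = x₁ + c) : y ∈ A := by
    obtain ⟨c', hc'⟩ := hreduce j y c hc
    exact mem_biUnion (Nat.mod_lt j q.pos) ⟨c', by simp [hc']⟩
  have hA_closed : IsClosed A := (finite_Iio n).isClosed_biUnion fun j _ =>
    Int.isClosedEmbedding_coe_real.isClosed_range.preimage ((f.continuous_pow hf j).sub
      continuous_const)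
  have hA_countable : A.Countable := (finite_Iio n).countable.biUnion fun j _ =>
    (countable_range _).preimage ((sub_left_injective).comp (coe_pow f j ▸ hfi.iterate j))
  have hA_orbit : {y | ∃ k : ℕ, ∃ m : ℤ, f^[k] x₁ + m = y ∨ f^[k] y + m = x₁} ⊆ A := by
    rintro y ⟨k, m, rfl | hy⟩
    · -- `f^(nk - k)` sends `f^k x₁ + m` to `f^(nk) x₁ + m = x₁ + kp + m`
      refine hmemA (n * k - k) _ (k * p + m) ?_
      rw [← coe_pow, map_add_int, ← mul_apply, ← pow_add,
        Nat.sub_add_cancel (Nat.le_mul_of_pos_left k q.pos), ← add_zero x₁, ← Int.cast_zero,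
        hperiodic]
      push_cast; ring
    · exact hmemA k y (-m) (by rw [coe_pow]; push_cast; linarith)
  have hA_univ : A = univ := hA_closed.closure_eq ▸ ((hmin x₁).mono hA_orbit).closure_eq
  exact Cardinal.not_countable_real (hA_univ ▸ hA_countable)

theorem exists_bijective_semiconj_of_isMinimalLift (f : CircleDeg1Lift) (hfb : Bijective f)
    (hmin : IsMinimalLift f) (hirr : Irrational f.translationNumber) :
    ∃ φ : CircleDeg1Lift, Bijective φ ∧ ∀ x, φ (f x) = φ x + f.translationNumber := by
  set θ := f.translationNumber
  obtain ⟨φ, hφ⟩ := semiconj_of_isUnit_of_translationNumber_eq (isUnit_iff_bijective.2 hfb)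
    (translate (Multiplicative.ofAdd θ)).isUnit (translationNumber_translate θ).symm
  have hφf (x : ℝ) : φ (f x) = φ x + θ := by rw [hφ x, translate_apply, add_comm]
  have hφiter (k : ℕ) (x : ℝ) : φ (f^[k] x) = φ x + k * θ := by
    induction k generalizing x with
    | zero => simp
    | succ k ih => rw [iterate_succ_apply, ih, hφf]; push_cast; ring
  have hφ_strictMono : StrictMono φ := by
    refine fun u v huv => (φ.monotone huv.le).lt_of_ne fun hφuv => ?_
    obtain ⟨y, ⟨k, m, hy⟩, huy, hyv⟩ := (hmin u).exists_between huv
    have hφy : φ y = φ u := le_antisymm (hφuv ▸ φ.monotone hyv.le) (φ.monotone huy.le)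
    have hkm : (k : ℝ) * θ + m = 0 := by
      rcases hy with rfl | hy
      · rw [map_add_int, hφiter] at hφy; linarith
      · have := congrArg φ hy
        rw [map_add_int, hφiter, hφy] at this; linarith
    obtain ⟨rfl, rfl⟩ := hirr.natCast_mul_add_intCast_eq_zero hkm
    simp only [iterate_zero, id_eq, Int.cast_zero, add_zero] at hy
    rcases hy with rfl | rfl <;> exact huy.ne rfl
  have hφ_denseRange : DenseRange φ := by
    refine ((Homeomorph.addLeft (φ 0)).surjective.denseRange.dense_image (by fun_prop)
      hirr.dense_natCast_mul_add_intCast).mono ?_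
    rintro _ ⟨_, ⟨n, m, rfl⟩, rfl⟩
    exact ⟨f^[n] 0 + m, by simp only [map_add_int, hφiter, Homeomorph.coe_addLeft]; ring⟩
  have hφ_surj : Surjective φ :=
    (continuous_iff_surjective φ).1 (φ.monotone.continuous_of_denseRange hφ_denseRange)
  exact ⟨φ, ⟨hφ_strictMono.injective, hφ_surj⟩, hφf⟩

theorem exists_continuous_conj_apply (φ g : CircleDeg1Lift) (hφ : Bijective φ)
    (hg : Continuous g) :
    ∃ h : CircleDeg1Lift, Continuous h ∧ h.translationNumber = g.translationNumber ∧
      ∀ x, h (φ x) = φ (g x) := by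
  obtain ⟨u, rfl⟩ := isUnit_iff_bijective.2 hφ
  set h : CircleDeg1Lift := u * g * ↑u⁻¹
  have hconj (x : ℝ) : h ((u : CircleDeg1Lift) x) = (u : CircleDeg1Lift) (g x) := by
    rw [mul_apply, mul_apply, units_inv_apply_apply u x]
  refine ⟨h, (continuous_iff_surjective h).2 fun z => ?_, translationNumber_conj_eq u g, hconj⟩
  obtain ⟨x, hx⟩ := (continuous_iff_surjective g).1 hg ((↑u⁻¹ : CircleDeg1Lift) z)
  exact ⟨u x, by rw [hconj, hx, units_apply_inv_apply u z]⟩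

end CircleDeg1Lift

theorem transNum_strictly_moves_general (F : ℝ → ℝ) (hF : IsCircleLift F) (hmin : IsMinimalLift F)
    (G : ℝ → ℝ → ℝ)
    (hGlift : ∀ t ∈ Icc (0:ℝ) 1, IsCircleLift (G t))
    (hG0 : G 0 = id)
    (hGmono : ∀ x : ℝ, MonotoneOn (fun t => G t x) (Icc 0 1))
    (ε : ℝ) (hε : ε ∈ Ioc (0:ℝ) 1)
    (τF τε : ℝ) (hτF : HasTransNum F τF)
    (hτε : HasTransNum (fun x => G ε (F x)) τε)
    (hmove : ∃ x₀ : ℝ, G ε (F x₀) ≠ F x₀) :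
    τε ≠ τF := by
  intro heq
  have hεI : ε ∈ Icc (0:ℝ) 1 := Ioc_subset_Icc_self hε
  set f := hF.toCircleDeg1Lift
  set g := (hGlift ε hεI).toCircleDeg1Lift * f
  have hτf : f.translationNumber = τF := f.translationNumber_eq_of_hasTransNum hτF
  have hτg : g.translationNumber = τF := heq ▸ g.translationNumber_eq_of_hasTransNum hτε
  have hirr : Irrational τF :=
    hτf ▸ f.irrational_translationNumber_of_isMinimalLift hF.1 hF.2.1.injective hmin
  have hGε (y : ℝ) : y ≤ G ε y := by
    simpa [hG0] using hGmono y (left_mem_Icc.2 zero_le_one) hεI hε.1.le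
  obtain ⟨φ, hφ, hφf⟩ := f.exists_bijective_semiconj_of_isMinimalLift
    ⟨hF.2.1.injective, hF.2.2.1⟩ hmin (hτf ▸ hirr)
  obtain ⟨k, hk, hτk, hkφ⟩ :=
    CircleDeg1Lift.exists_continuous_conj_apply φ g hφ ((hGlift ε hεI).1.comp hF.1)
  have hkle (y : ℝ) : y + τF ≤ k y := by
    obtain ⟨x, rfl⟩ := hφ.2 y
    rw [hkφ, ← hτf, ← hφf]
    exact φ.monotone (hGε _)
  obtain ⟨x₀, hx₀⟩ := hmove
  have hklt : φ x₀ + τF < k (φ x₀) := by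
    rw [hkφ, ← hτf, ← hφf]
    exact (φ.monotone.strictMono_of_injective hφ.1) ((hGε _).lt_of_ne' hx₀)
  exact (k.lt_translationNumber_of_add_le_of_add_lt hk hirr hkle hklt).ne' (hτk.trans hτg)

/-- If the circle homeomorphism induced by `F` is minimal, `(G_t)_{t∈[0,1]}` is a continuous
family of lifts with `G₀ = id` and `t ↦ G_t(x)` nondecreasing for every `x`, and if
`ε ∈ (0,1]` is such that `τ(G_ε ∘ F) − τ(F) < 1` (so the rotation numbers of the
`G_t ∘ F`, `t ∈ [0,ε]`, do not attain every value of `ℝ/ℤ`) and `G_ε(F(x₀)) ≠ F(x₀)` for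
some `x₀`, then `τ(G_ε ∘ F) ≠ τ(F)`. -/
theorem transNum_strictly_moves (F : ℝ → ℝ) (hF : IsCircleLift F) (hmin : IsMinimalLift F)
    (G : ℝ → ℝ → ℝ)
    (hGcont : ContinuousOn (fun p : ℝ × ℝ => G p.1 p.2) (Icc 0 1 ×ˢ univ))
    (hGlift : ∀ t ∈ Icc (0:ℝ) 1, IsCircleLift (G t))
    (hG0 : G 0 = id)
    (hGmono : ∀ x : ℝ, MonotoneOn (fun t => G t x) (Icc 0 1))
    (ε : ℝ) (hε : ε ∈ Ioc (0:ℝ) 1)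
    (τF τε : ℝ) (hτF : HasTransNum F τF)
    (hτε : HasTransNum (fun x => G ε (F x)) τε)
    (hlt : τε - τF < 1)
    (hmove : ∃ x₀ : ℝ, G ε (F x₀) ≠ F x₀) :
    τε ≠ τF :=
  transNum_strictly_moves_general F hF hmin G hGlift hG0 hGmono ε hε τF τε hτF hτε hmove
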